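/- In the setup below, let T be a bounded operator on ℓ²(Z) of finite propagation. Then: (i) if y ∈ G satisfies d(e,y) > Prop(T) + δ/2, then T̂_y(x) = 0 for all x ∈ G; (ii) for all x,y ∈ G, |T̂_y(x)| ≤ ‖φ‖_∞² · ‖T‖ · Δ(y)^{−1/2}. -/

import Mathlib

open MeasureTheory Metric Bornology Filter Topology
open scoped ENNReal BoundedContinuousFunction

noncomputable section

/-- `ℓ²(X)` over `ℂ`. -/
abbrev l2 (X : Type*) : Type _ := lp (fun _ : X => ℂ) 2

/-- The standard basis vector `δ_x` of `ℓ²(X)`. -/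
def delta {X : Type*} (x : X) : l2 X := by classical exact lp.single 2 x 1

/-- The matrix entry `a_{x,y} = ⟨a δ_y, δ_x⟩` of a bounded operator on `ℓ²(X)`. -/
def entry {X : Type*} (a : l2 X →L[ℂ] l2 X) (x y : X) : ℂ := inner ℂ (delta x) (a (delta y))

/-- `d` is a proper left-invariant metric on the topological group `G` that induces
(is compatible with) its topology. -/
structure IsProperLeftInvariantCompatibleMetric (G : Type*) [Group G] [TopologicalSpace G]
    (d : G → G → ℝ) : Prop where
  refl : ∀ x, d x x = 0
  eq_of : ∀ {x y}, d x y = 0 → x = y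
  symm : ∀ x y, d x y = d y x
  triangle : ∀ x y z, d x z ≤ d x y + d y z
  left_invariant : ∀ g x y, d (g * x) (g * y) = d x y
  compatible : ∀ s : Set G, IsOpen s ↔ ∀ x ∈ s, ∃ ε > 0, ∀ y, d x y < ε → y ∈ s
  proper : ∀ (x : G) (r : ℝ), IsCompact {y : G | d x y ≤ r}

/-- The kernel `T̂` associated to a finite propagation operator `T` on `ℓ²(Z)`:
`T̂_y(x) = ∑_{z,w ∈ Z} φ_z(x) φ_w(xy) T_{z,w} Δ(y)^{-1/2}`, where `φ_z(g) = φ(z⁻¹g)`. -/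
def hatT {G : Type*} [Group G] (Δ : G → ℝ) (φ : G → ℝ) (Z : Set G)
    (T : l2 Z →L[ℂ] l2 Z) (y x : G) : ℂ :=
  ∑' (z : Z) (w : Z),
    ((φ ((z : G)⁻¹ * x) : ℝ) : ℂ) * ((φ ((w : G)⁻¹ * (x * y)) : ℝ) : ℂ) * entry T z w *
      (((Δ y ^ (-(1/2) : ℝ) : ℝ)) : ℂ)


/-!
The support of `φ_z` lies in the ball of radius `δ/4` about `z` and `Z` is `δ`-separated, so for
each `x` at most one `z ∈ Z` has `φ_z(x) ≠ 0`. Hence each of the two sums defining `T̂_y(x)`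
has at most one nonzero term, which is at most `‖φ‖_∞² ‖T‖ Δ(y)^{-1/2}` in norm since
`|T_{z,w}| ≤ ‖T‖`. If that term is nonzero, the triangle inequality through `x`, `z`, `w`, `xy`
together with `d(x, xy) = d(e, y)` gives `d(e, y) ≤ d(z, w) + δ/2`, so `T_{z,w} = 0` once
`d(e, y) > Prop(T) + δ/2`.
-/

theorem norm_delta {X : Type*} (x : X) : ‖delta x‖ = 1 := by
  simp [delta]

theorem norm_entry_le {X : Type*} (a : l2 X →L[ℂ] l2 X) (x y : X) : ‖entry a x y‖ ≤ ‖a‖ :=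
  calc ‖entry a x y‖ ≤ ‖delta x‖ * ‖a (delta y)‖ := norm_inner_le_norm _ _
    _ ≤ ‖delta x‖ * (‖a‖ * ‖delta y‖) := by gcongr; exact a.le_opNorm _
    _ = ‖a‖ := by rw [norm_delta, norm_delta, one_mul, mul_one]

theorem norm_tsum_le_of_subsingleton {α E : Type*} [NormedAddCommGroup E] {f : α → E}
    {s : Set α} (hs : s.Subsingleton) (hf : ∀ a ∉ s, f a = 0) {C : ℝ} (hC : 0 ≤ C)
    (hfC : ∀ a ∈ s, ‖f a‖ ≤ C) : ‖∑' a, f a‖ ≤ C := by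
  rcases hs.eq_empty_or_singleton with rfl | ⟨a, rfl⟩
  · simpa [show f = 0 from funext fun a => hf a (Set.notMem_empty a)] using hC
  · rw [tsum_eq_single a fun b hb => hf b hb]
    exact hfC a rfl

namespace IsProperLeftInvariantCompatibleMetric

variable {G : Type*} [Group G] [TopologicalSpace G] {d : G → G → ℝ}

theorem dist_one_inv_mul (hd : IsProperLeftInvariantCompatibleMetric G d) (z x : G) :
    d 1 (z⁻¹ * x) = d z x := by
  simpa using (hd.left_invariant z 1 (z⁻¹ * x)).symm

theorem dist_mul_right (hd : IsProperLeftInvariantCompatibleMetric G d) (x y : G) :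
    d x (x * y) = d 1 y := by
  simpa using hd.left_invariant x 1 y

theorem dist_le_of_translate_ne_zero (hd : IsProperLeftInvariantCompatibleMetric G d)
    {M : Type*} [Zero M] {φ : G → M} {r : ℝ} (hφ : ∀ g, r < d 1 g → φ g = 0) {z x : G}
    (h : φ (z⁻¹ * x) ≠ 0) : d z x ≤ r := by
  by_contra! hlt
  exact h (hφ _ (by rwa [hd.dist_one_inv_mul]))

theorem subsingleton_setOf_translate_ne_zero (hd : IsProperLeftInvariantCompatibleMetric G d)
    {M : Type*} [Zero M] {φ : G → M} {r δ : ℝ} (hφ : ∀ g, r < d 1 g → φ g = 0) {Z : Set G}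
    (hsep : ∀ z ∈ Z, ∀ w ∈ Z, z ≠ w → δ ≤ d z w)
    (hr : 2 * r < δ) (x : G) : {z : Z | φ ((z : G)⁻¹ * x) ≠ 0}.Subsingleton := by
  intro z hz z' hz'
  by_contra hne
  have hδ := hsep z z.2 z' z'.2 (Subtype.coe_ne_coe.mpr hne)
  have h₁ := hd.dist_le_of_translate_ne_zero hφ hz
  have h₂ := hd.dist_le_of_translate_ne_zero hφ hz'
  linarith [hd.triangle z x z', hd.symm x z']

theorem dist_one_le_of_translate_ne_zero (hd : IsProperLeftInvariantCompatibleMetric G d)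
    {M : Type*} [Zero M] {φ : G → M} {r : ℝ} (hφ : ∀ g, r < d 1 g → φ g = 0) {z w x y : G}
    (hz : φ (z⁻¹ * x) ≠ 0) (hw : φ (w⁻¹ * (x * y)) ≠ 0) : d 1 y ≤ d z w + 2 * r := by
  have h₁ := hd.dist_le_of_translate_ne_zero hφ hz
  have h₂ := hd.dist_le_of_translate_ne_zero hφ hw
  rw [← hd.dist_mul_right x]
  linarith [hd.triangle x z (x * y), hd.triangle z w (x * y), hd.symm x z]

end IsProperLeftInvariantCompatibleMetric

theorem hatT_support_and_bound_general
    (G : Type*) [Group G] [TopologicalSpace G]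
    (Δ : G → ℝ) (hΔpos : ∀ y : G, 0 < Δ y)
    (d : G → G → ℝ) (hd : IsProperLeftInvariantCompatibleMetric G d)
    (Z : Set G)
    (δ : ℝ) (hδpos : 0 < δ)
    (hsep : ∀ z ∈ Z, ∀ w ∈ Z, z ≠ w → δ ≤ d z w)
    (φ : G → ℝ) (hφnn : ∀ g : G, 0 ≤ φ g)
    (hφsupp : ∀ g : G, δ / 4 < d 1 g → φ g = 0)
    (T : l2 Z →L[ℂ] l2 Z) (P : ℝ)
    (hT : ∀ z w : Z, P < d z w → entry T z w = 0) :
    (∀ y : G, P + δ / 2 < d 1 y → ∀ x : G, hatT Δ φ Z T y x = 0) ∧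
    (∀ Cφ : ℝ, (∀ g : G, φ g ≤ Cφ) →
      ∀ x y : G, ‖hatT Δ φ Z T y x‖ ≤ Cφ ^ 2 * ‖T‖ * Δ y ^ (-(1/2) : ℝ)) := by
  have hsub := hd.subsingleton_setOf_translate_ne_zero hφsupp hsep (by linarith)
  constructor
  · intro y hy x
    have hterm : ∀ z w : Z,
        φ ((z : G)⁻¹ * x) = 0 ∨ φ ((w : G)⁻¹ * (x * y)) = 0 ∨ entry T z w = 0 := by
      intro z w
      by_contra! ⟨hz, hw, hzw⟩
      have hy' := hd.dist_one_le_of_translate_ne_zero hφsupp hz hw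
      exact hzw (hT z w (by linarith))
    have hzero : ∀ z w : Z,
        ((φ ((z : G)⁻¹ * x) : ℝ) : ℂ) * ((φ ((w : G)⁻¹ * (x * y)) : ℝ) : ℂ) * entry T z w *
          (((Δ y ^ (-(1/2) : ℝ) : ℝ)) : ℂ) = 0 := fun z w => by
      rcases hterm z w with h | h | h <;> simp [h]
    simp only [hatT, hzero, tsum_zero]
  · intro Cφ hCφ x y
    have hC : 0 ≤ Cφ := (hφnn 1).trans (hCφ 1)
    have hΔ : 0 ≤ Δ y ^ (-(1/2) : ℝ) := Real.rpow_nonneg (hΔpos y).le _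
    refine norm_tsum_le_of_subsingleton (hsub x) (fun z hz => ?_) (by positivity) fun z _ => ?_
    · simp [show φ ((z : G)⁻¹ * x) = 0 from not_not.mp hz]
    refine norm_tsum_le_of_subsingleton (hsub (x * y)) (fun w hw => ?_) (by positivity)
      fun w _ => ?_
    · simp [show φ ((w : G)⁻¹ * (x * y)) = 0 from not_not.mp hw]
    simp only [norm_mul, Complex.norm_real, Real.norm_of_nonneg (hφnn _), Real.norm_of_nonneg hΔ]
    have hentry := norm_entry_le T z w
    rw [sq]
    gcongr <;> first | exact hφnn _ | exact hCφ _

/-- (i) If `d(e,y) > Prop(T) + δ/2` then `T̂_y = 0`;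
(ii) `|T̂_y(x)| ≤ ‖φ‖_∞² ‖T‖ Δ(y)^{-1/2}`. -/
theorem hatT_support_and_bound
    (G : Type*) [Group G] [TopologicalSpace G] [IsTopologicalGroup G]
    [LocallyCompactSpace G] [SecondCountableTopology G] [T2Space G]
    [MeasurableSpace G] [BorelSpace G]
    (μ : Measure G) [μ.IsHaarMeasure]
    (Δ : G → ℝ) (hΔpos : ∀ y : G, 0 < Δ y)
    (hΔ : ∀ y : G, Measure.map (fun x => x * y) μ = ENNReal.ofReal (Δ y)⁻¹ • μ)
    (d : G → G → ℝ) (hd : IsProperLeftInvariantCompatibleMetric G d)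
    (Z : Set G)
    (hZulf : ∀ S > (0:ℝ), ∃ N : ℕ, ∀ z ∈ Z,
      {x ∈ Z | d z x ≤ S}.Finite ∧ {x ∈ Z | d z x ≤ S}.ncard ≤ N)
    (δ : ℝ) (hδpos : 0 < δ)
    (hsep : ∀ z ∈ Z, ∀ w ∈ Z, z ≠ w → δ ≤ d z w)
    (hlat : ∃ R > (0:ℝ), ∀ x : G, ∃ z ∈ Z, d z x ≤ R)
    (φ : G → ℝ) (hφcont : Continuous φ) (hφnn : ∀ g : G, 0 ≤ φ g)
    (hφsupp : ∀ g : G, δ / 4 < d 1 g → φ g = 0)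
    (hφnorm : ∫ g, φ g ^ 2 ∂μ = 1)
    (T : l2 Z →L[ℂ] l2 Z) (P : ℝ) (hP : 0 ≤ P)
    (hT : ∀ z w : Z, P < d z w → entry T z w = 0) :
    (∀ y : G, P + δ / 2 < d 1 y → ∀ x : G, hatT Δ φ Z T y x = 0) ∧
    (∀ Cφ : ℝ, (∀ g : G, φ g ≤ Cφ) →
      ∀ x y : G, ‖hatT Δ φ Z T y x‖ ≤ Cφ ^ 2 * ‖T‖ * Δ y ^ (-(1/2) : ℝ)) :=
  hatT_support_and_bound_general G Δ hΔpos d hd Z δ hδpos hsep φ hφnn hφsupp T P hT
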